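/- arXiv:2401.15736 — 3 statements merged into one kernel-verified Lean document; each statement's English description precedes it below -/
import Mathlib

section
/- Let φ ∈ (1/2, 1) be irrational and k a positive integer. Then there exists y ∈ [φ, 1) with y + kφ mod 1 ∈ [φ, 1) if and only if kφ mod 1 ∉ [1−φ, φ]. -/
/-- For irrational `φ ∈ (1/2,1)` and `k ≥ 1`, there exists `y ∈ [φ,1)` with
`y + kφ mod 1 ∈ [φ,1)` iff `kφ mod 1 ∉ [1-φ, φ]`. -/
theorem stmt1 (φ : ℝ) (hφ : φ ∈ Set.Ioo (1/2 : ℝ) 1) (hirr : Irrational φ)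
    (k : ℕ) (hk : 1 ≤ k) :
    (∃ y ∈ Set.Ico φ 1, Int.fract (y + (k : ℝ) * φ) ∈ Set.Ico φ 1) ↔
      Int.fract ((k : ℝ) * φ) ∉ Set.Icc (1 - φ) φ := by
  obtain ⟨hφ1, hφ2⟩ := hφ
  set α := Int.fract ((k:ℝ)*φ) with hα
  have hα0 : 0 ≤ α := Int.fract_nonneg _
  have hα1 : α < 1 := Int.fract_lt_one _
  have key : ∀ y : ℝ, Int.fract (y + (k:ℝ)*φ) = Int.fract (y + α) := by
    intro y
    rw [hα, show y + Int.fract ((k:ℝ)*φ) = y + (k:ℝ)*φ - (⌊(k:ℝ)*φ⌋:ℤ) from by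
      rw [Int.fract]; push_cast; ring, Int.fract_sub_intCast]
  constructor
  · rintro ⟨y, ⟨hy1, hy2⟩, hf⟩ ⟨h1, h2⟩
    rw [key] at hf
    have h3 : (1:ℝ) ≤ y + α := by linarith
    have h4 : y + α - 1 < 1 := by linarith
    have heq : Int.fract (y + α) = y + α - 1 := by
      rw [show y + α - 1 = y + α - ((1:ℤ):ℝ) from by push_cast; ring]
      rw [← Int.fract_sub_intCast (y+α) 1]
      exact Int.fract_eq_self.mpr ⟨by push_cast; linarith, by push_cast; linarith⟩
    rw [heq] at hf
    have := hf.1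
    linarith
  · intro h
    rw [Set.mem_Icc] at h
    push_neg at h
    by_cases hc : α < 1 - φ
    · refine ⟨φ, ⟨le_refl _, hφ2⟩, ?_⟩
      rw [key, Int.fract_eq_self.mpr ⟨by linarith, by linarith⟩]
      exact ⟨by linarith, by linarith⟩
    · have hc' : φ < α := h (by linarith)
      refine ⟨1 + φ - α, ⟨by linarith, by linarith⟩, ?_⟩
      rw [key]
      rw [show 1 + φ - α + α = φ + ((1:ℤ):ℝ) from by push_cast; ring,
        Int.fract_add_intCast, Int.fract_eq_self.mpr ⟨by linarith, hφ2⟩]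
      exact ⟨le_refl _, hφ2⟩
end

section
/- Let φ ∈ ℝ/ℤ be badly approximable and let P ⊆ ℝ/ℤ be an arc of length at least 1/2. Then there exist r > 0 and a positive integer d, independent of the starting point, such that for all sufficiently large k and every x₀ ∈ ℝ/ℤ, the number of indices i ∈ {1, 2, …, dk} with x₀ + i·kφ mod 1 ∈ P is at least rk. -/
/-!
By Dirichlet's theorem some `q ≤ 3` has `γ = q·kφ - j` with `|γ| ≤ 1/4`, and bad approximability
of `φ` forces `|γ| > c/(3k)`. Walking along the multiples `T·q` of `q`, the points `T·γ` advance
by steps of size `|γ| ≤ 1/4`, so after `O(k/c)` steps one finds `m` with `fract (m·kφ) ∈ [1/2, 3/4]`.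
For a rotation `w` of that size, one of `x, x + w, x + 2w` lies in any arc of length at least
`1/2`. Hence each of the triples `{i, i + m, i + 2m}`, `1 ≤ i ≤ k`, contains a visit to `P`, and
since each visit lies in at most three triples there are at least `k/3` visits among the first
`k + 2m = O(k)` indices.
-/

open Finset

theorem Int.fract_add_of_one_le_fract_add_fract {R : Type*} [CommRing R] [LinearOrder R]
    [IsStrictOrderedRing R] [FloorRing R] {a b : R} (h : 1 ≤ fract a + fract b) :
    fract (a + b) = fract a + fract b - 1 := by
  refine Int.fract_eq_iff.mpr ⟨by linarith, ?_, ⌊a⌋ + ⌊b⌋ + 1, ?_⟩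
  · linarith [Int.fract_lt_one a, Int.fract_lt_one b]
  · push_cast [← Int.self_sub_floor]; ring

theorem exists_lt_three_fract_add_mul_lt {L w : ℝ} (hL : 1 / 2 ≤ L)
    (hw : Int.fract w ∈ Set.Icc (1 / 2 : ℝ) (3 / 4)) (u : ℝ) :
    ∃ j : ℕ, j < 3 ∧ Int.fract (u + j * w) < L := by
  by_contra! h
  have h₀ := h 0 (by norm_num)
  have h₁ := h 1 (by norm_num)
  have h₂ := h 2 (by norm_num)
  simp only [CharP.cast_eq_zero, zero_mul, add_zero, Nat.cast_one, one_mul, Nat.cast_ofNat] at h₀ h₁ h₂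
  obtain ⟨hw₁, hw₂⟩ := hw
  have e₁ : Int.fract (u + w) = Int.fract u + Int.fract w - 1 :=
    Int.fract_add_of_one_le_fract_add_fract (by linarith)
  have e₂ : Int.fract (u + 2 * w) = Int.fract (u + w) + Int.fract w - 1 := by
    rw [two_mul, ← add_assoc]
    exact Int.fract_add_of_one_le_fract_add_fract (by linarith)
  linarith [Int.fract_lt_one u]

theorem card_filter_add_le_card_filter {p : ℕ → Prop} [DecidablePred p] {s k N : ℕ}
    (h : k + s ≤ N) : #{i ∈ Icc 1 k | p (i + s)} ≤ #{i ∈ Icc 1 N | p i} := by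
  refine card_le_card_of_injOn (· + s) (fun i hi => ?_) (fun i _ j _ hij => by simpa using hij)
  simp only [coe_filter, mem_Icc, Set.mem_ofPred_eq] at hi ⊢
  exact ⟨⟨by omega, by omega⟩, hi.2⟩

theorem le_mul_card_filter_of_forall_exists {p : ℕ → Prop} [DecidablePred p] {n m k N : ℕ}
    (hN : k + (n - 1) * m ≤ N) (hp : ∀ i, ∃ j < n, p (i + j * m)) :
    k ≤ n * #{i ∈ Icc 1 N | p i} := by
  calc k = #(Icc 1 k) := by simp
    _ ≤ #((range n).biUnion fun j => {i ∈ Icc 1 k | p (i + j * m)}) := by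
        refine card_le_card fun i hi => ?_
        obtain ⟨j, hj, hpj⟩ := hp i
        simp only [mem_biUnion, mem_range, mem_filter]
        exact ⟨j, hj, hi, hpj⟩
    _ ≤ ∑ j ∈ range n, #{i ∈ Icc 1 k | p (i + j * m)} := card_biUnion_le
    _ ≤ ∑ _j ∈ range n, #{i ∈ Icc 1 N | p i} := by
        refine sum_le_sum fun j hj => card_filter_add_le_card_filter ?_
        have : j * m ≤ (n - 1) * m := Nat.mul_le_mul_right m (by simp at hj; omega)
        omega
    _ = n * #{i ∈ Icc 1 N | p i} := by simp

theorem exists_nat_fract_mul_mem_Ico {β a : ℝ} (hβ : 0 < β) (ha : 0 ≤ a) (hab : a + β ≤ 1) :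
    ∃ T : ℕ, (T : ℝ) ≤ a / β + 1 ∧ Int.fract (T * β) ∈ Set.Ico a (a + β) := by
  have hT : (⌈a / β⌉₊ : ℝ) < a / β + 1 := Nat.ceil_lt_add_one (div_nonneg ha hβ.le)
  have hT₁ : a ≤ ⌈a / β⌉₊ * β := (div_le_iff₀ hβ).mp (Nat.le_ceil _)
  have hT₂ : ⌈a / β⌉₊ * β < a + β := by rwa [← lt_div_iff₀ hβ, add_div, div_self hβ.ne']
  refine ⟨⌈a / β⌉₊, hT.le, ?_⟩
  rw [Int.fract_eq_self.mpr ⟨by linarith, by linarith⟩]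
  exact ⟨hT₁, hT₂⟩

theorem exists_nat_fract_mul_mem_Icc {γ : ℝ} (hγ₀ : γ ≠ 0) (hγ : |γ| ≤ 1 / 4) :
    ∃ T : ℕ, (T : ℝ) ≤ 1 / (2 * |γ|) + 1 ∧ Int.fract (T * γ) ∈ Set.Icc (1 / 2 : ℝ) (3 / 4) := by
  rcases hγ₀.lt_or_gt with hneg | hpos
  · rw [abs_of_neg hneg] at hγ ⊢
    obtain ⟨T, hT, h₁, h₂⟩ := exists_nat_fract_mul_mem_Ico (neg_pos.mpr hneg) (a := 1 / 4)
      (by norm_num) (by linarith)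
    have hne : Int.fract (T * -γ) ≠ 0 := by linarith
    refine ⟨T, ?_, ?_⟩
    · calc (T : ℝ) ≤ 1 / 4 / -γ + 1 := hT
        _ ≤ 1 / (2 * -γ) + 1 := by
          rw [div_div]; gcongr <;> linarith
    · rw [show (T : ℝ) * γ = -(T * -γ) by ring, Int.fract_neg hne]
      constructor <;> linarith
  · rw [abs_of_pos hpos] at hγ ⊢
    obtain ⟨T, hT, h₁, h₂⟩ := exists_nat_fract_mul_mem_Ico hpos (a := 1 / 2)
      (by norm_num) (by linarith)
    refine ⟨T, by rwa [div_div] at hT, h₁, by linarith⟩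

theorem div_lt_abs_mul_sub_of_forall_div_sq_lt {φ c : ℝ}
    (hba : ∀ (p : ℤ) (q : ℕ), 1 ≤ q → c / (q : ℝ) ^ 2 < |φ - (p : ℝ) / q|)
    (p : ℤ) {q : ℕ} (hq : 1 ≤ q) : c / q < |q * φ - p| := by
  have hq' : (0 : ℝ) < q := by exact_mod_cast hq
  calc c / q = q * (c / q ^ 2) := by field_simp
    _ < q * |φ - p / q| := by gcongr; exact hba p q hq
    _ = |q * (φ - p / q)| := by rw [abs_mul, abs_of_pos hq']
    _ = |q * φ - p| := by rw [mul_sub, mul_div_cancel₀ _ hq'.ne']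

theorem exists_nat_fract_mul_mem_Icc_of_forall_div_sq_lt {φ c : ℝ} (hc : 0 < c)
    (hba : ∀ (p : ℤ) (q : ℕ), 1 ≤ q → c / (q : ℝ) ^ 2 < |φ - (p : ℝ) / q|) {k : ℕ} (hk : 1 ≤ k) :
    ∃ m : ℕ, (m : ℝ) ≤ (9 / (2 * c) + 3) * k ∧
      Int.fract (m * (k * φ)) ∈ Set.Icc (1 / 2 : ℝ) (3 / 4) := by
  obtain ⟨q, hq₀, hq₃, hγ⟩ := Real.exists_nat_abs_mul_sub_round_le (k * φ) (n := 3) (by norm_num)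
  set j := round (q * (k * φ))
  set γ := q * (k * φ) - j
  have hγ_gt : c / (q * k : ℕ) < |γ| := by
    have := div_lt_abs_mul_sub_of_forall_div_sq_lt hba j (Nat.mul_pos hq₀ hk)
    convert this using 3; push_cast; ring
  have hqk : (0 : ℝ) < q * k := by positivity
  have hγ₀ : γ ≠ 0 := by
    rintro h
    rw [h, abs_zero] at hγ_gt
    exact (div_pos hc (by exact_mod_cast hqk)).not_ge hγ_gt.le
  obtain ⟨T, hT, hw⟩ := exists_nat_fract_mul_mem_Icc hγ₀ (by norm_num at hγ ⊢; linarith)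
  refine ⟨T * q, ?_, ?_⟩
  · have hinv : 1 / |γ| < q * k / c := by
      push_cast at hγ_gt
      rw [div_lt_div_iff₀ (abs_pos.2 hγ₀) hc]
      rw [div_lt_iff₀ hqk] at hγ_gt
      linarith
    have hq : (q : ℝ) ≤ 3 := by exact_mod_cast hq₃
    have hk' : (1 : ℝ) ≤ k := by exact_mod_cast hk
    calc ((T * q : ℕ) : ℝ) = T * q := by push_cast; ring
      _ ≤ (q * k / (2 * c) + 1) * q := by
        gcongr
        calc (T : ℝ) ≤ 1 / (2 * |γ|) + 1 := hT
          _ = 1 / |γ| / 2 + 1 := by ring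
          _ ≤ q * k / c / 2 + 1 := by linarith
          _ = q * k / (2 * c) + 1 := by ring
      _ ≤ (3 * k / (2 * c) + 1) * 3 := by gcongr
      _ = 9 / (2 * c) * k + 3 := by ring
      _ ≤ (9 / (2 * c) + 3) * k := by linarith
  · rwa [show ((T * q : ℕ) : ℝ) * (k * φ) = T * γ + (T * j : ℤ) by push_cast [γ]; ring,
      Int.fract_add_intCast]

theorem stmt6_general (φ : ℝ)
    (hba : ∃ c > 0, ∀ (p : ℤ) (q : ℕ), 1 ≤ q → c / (q : ℝ) ^ 2 < |φ - (p : ℝ) / q|)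
    (a L : ℝ) (hL : 1/2 ≤ L) :
    ∃ r > 0, ∃ d : ℕ, 0 < d ∧ ∃ K : ℕ, ∀ k ≥ K, ∀ x₀ : ℝ,
      r * k ≤ (((Finset.Icc 1 (d * k)).filter
        (fun i : ℕ => Int.fract (x₀ + (i : ℝ) * ((k : ℝ) * φ) - a) < L)).card : ℝ) := by
  obtain ⟨c, hc, hba⟩ := hba
  refine ⟨1 / 3, by norm_num, ⌈9 / c⌉₊ + 7, by omega, 1, fun k hk x₀ => ?_⟩
  obtain ⟨m, hm, hw⟩ := exists_nat_fract_mul_mem_Icc_of_forall_div_sq_lt hc hba hk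
  have hN : k + (3 - 1) * m ≤ (⌈9 / c⌉₊ + 7) * k := by
    have hceil : (9 / c : ℝ) * k ≤ ⌈9 / c⌉₊ * k := by gcongr; exact Nat.le_ceil _
    have h2m : (2 * m : ℝ) ≤ (9 / c + 6) * k := by
      calc (2 * m : ℝ) ≤ 2 * ((9 / (2 * c) + 3) * k) := by gcongr
        _ = (9 / c + 6) * k := by field_simp; ring
    have hN' : (k + 2 * m : ℝ) ≤ (⌈9 / c⌉₊ + 7) * k := by linarith
    exact_mod_cast hN'
  have hcount := le_mul_card_filter_of_forall_exists
    (p := fun i : ℕ => Int.fract (x₀ + (i : ℝ) * ((k : ℝ) * φ) - a) < L) hN fun i => by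
      obtain ⟨j, hj, h⟩ := exists_lt_three_fract_add_mul_lt hL hw (x₀ + i * (k * φ) - a)
      exact ⟨j, hj, by convert h using 2; push_cast; ring⟩
  rw [one_div_mul_eq_div, div_le_iff₀ (by norm_num), mul_comm]
  exact_mod_cast hcount

/-- Fast ergodicity: for badly approximable `φ` and an arc `P` of length
`L ≥ 1/2` (the arc starting at `a` of length `L`, i.e. points `x` with
`fract (x - a) < L`), there are `r > 0` and `d ∈ ℕ` such that for all
sufficiently large `k` and every starting point `x₀`, the orbit
`x_i = x₀ + i·kφ` visits `P` at least `rk` times among `i ∈ {1,…,dk}`. -/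
theorem stmt6 (φ : ℝ)
    (hba : ∃ c > 0, ∀ (p : ℤ) (q : ℕ), 1 ≤ q → c / (q : ℝ) ^ 2 < |φ - (p : ℝ) / q|)
    (a L : ℝ) (hL : 1/2 ≤ L) (hL1 : L ≤ 1) :
    ∃ r > 0, ∃ d : ℕ, 0 < d ∧ ∃ K : ℕ, ∀ k ≥ K, ∀ x₀ : ℝ,
      r * k ≤ (((Finset.Icc 1 (d * k)).filter
        (fun i : ℕ => Int.fract (x₀ + (i : ℝ) * ((k : ℝ) * φ) - a) < L)).card : ℝ) :=
  stmt6_general φ hba a L hL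
end

section
/- Let φ ∈ ℝ/ℤ with kφ mod 1 ∈ (1/5, 1/2) for a fixed positive integer k, and let x₀ ∈ ℝ/ℤ. Define x_i = x₀ + i·kφ mod 1. Then for every i ≥ 0, at least one of the four consecutive points x_i, x_{i+1}, x_{i+2}, x_{i+3} lies in [1/2, 1). -/
/-- If the rotation step `kφ mod 1` lies in `(1/5, 1/2)`, then among any four
consecutive points of the orbit `x_i = x₀ + i·kφ` at least one lies in the
half-circle `[1/2, 1)`. -/
theorem stmt7 (φ x₀ : ℝ) (k : ℕ) (hk : 1 ≤ k)
    (h : Int.fract ((k : ℝ) * φ) ∈ Set.Ioo (1/5 : ℝ) (1/2)) :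
    ∀ i : ℕ, ∃ j ≤ 3,
      Int.fract (x₀ + ((i + j : ℕ) : ℝ) * ((k : ℝ) * φ)) ∈ Set.Ico (1/2 : ℝ) 1 := by
  obtain ⟨h1, h2⟩ := h
  intro i
  set s := Int.fract ((k : ℝ) * φ) with hs
  set y := Int.fract (x₀ + (i : ℝ) * ((k : ℝ) * φ)) with hy
  have hy0 : 0 ≤ y := Int.fract_nonneg _
  have hy1 : y < 1 := Int.fract_lt_one _
  have key : ∀ j : ℕ, Int.fract (x₀ + ((i + j : ℕ) : ℝ) * ((k : ℝ) * φ))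
      = Int.fract (y + (j : ℝ) * s) := by
    intro j
    have heq : x₀ + ((i + j : ℕ) : ℝ) * ((k : ℝ) * φ)
        = (y + (j : ℝ) * s) + ((⌊x₀ + (i : ℝ) * ((k : ℝ) * φ)⌋
            + (j : ℤ) * ⌊(k : ℝ) * φ⌋ : ℤ) : ℝ) := by
      rw [hy, hs]
      unfold Int.fract
      push_cast
      ring
    rw [heq, Int.fract_add_intCast]
  by_cases c0 : 1/2 ≤ y
  · exact ⟨0, by norm_num, by
      rw [key 0]
      norm_num
      rw [Int.fract_eq_self.mpr ⟨hy0, hy1⟩]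
      exact ⟨c0, hy1⟩⟩
  push_neg at c0
  by_cases c1 : 1/2 ≤ y + s
  · refine ⟨1, by norm_num, ?_⟩
    rw [key 1]
    push_cast
    rw [Int.fract_eq_self.mpr ⟨by positivity, by linarith⟩]
    constructor <;> linarith
  push_neg at c1
  by_cases c2 : 1/2 ≤ y + 2 * s
  · refine ⟨2, by norm_num, ?_⟩
    rw [key 2]
    push_cast
    rw [Int.fract_eq_self.mpr ⟨by positivity, by linarith⟩]
    constructor <;> linarith
  push_neg at c2
  refine ⟨3, le_refl 3, ?_⟩
  rw [key 3]
  push_cast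
  rw [Int.fract_eq_self.mpr ⟨by positivity, by linarith⟩]
  constructor <;> linarith
end
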